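/- arXiv:1304.6371 — 2 statements merged into one kernel-verified Lean document; each statement's English description precedes it below -/
import Mathlib

section
/- Let (R, ⊕, ·) be a semihyperring. Then R is fully idempotent if and only if every fuzzy hyperideal δ of R is idempotent, i.e. δδ = δ (where δδ is the product of δ with itself). -/
/-!
A fuzzy hyperideal `δ` always satisfies `δδ ≤ δ`. For the reverse inequality at `x`, apply full
idempotence to the hyperideal `{y | δ x ≤ δ y}`: it contains `x`, so `x` lies in a hypersum of
products of its elements, and each such product contributes at least `δ x` to `(δδ)(x)`.
Conversely, the characteristic function of a hyperideal `I` is a fuzzy hyperideal, and the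
product of characteristic functions of `A` and `B` is the characteristic function of `AB`, so
`χ_I χ_I = χ_I` forces `I² = I`.
-/

/-- The unit interval `[0,1]` is a complete lattice. -/
noncomputable instance : Fact ((0:ℝ) ≤ 1) := ⟨zero_le_one⟩

/-- A semihyperring `(R, ⊕, ·)`: a hyperoperation `hadd` (with nonempty values),
a binary multiplication `mul`, and an element `zero`, satisfying commutativity and
(extended) associativity of `⊕`, associativity of `·`, two-sided distributivity of
`·` over `⊕` (as sets), and `0 ⊕ x = {x}`, `0·x = 0 = x·0`. -/
class Semihyperring (R : Type*) where
  hadd : R → R → Set R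
  mul : R → R → R
  zero : R
  hadd_nonempty : ∀ x y : R, (hadd x y).Nonempty
  hadd_comm : ∀ x y : R, hadd x y = hadd y x
  hadd_assoc : ∀ x y z : R, (⋃ w ∈ hadd y z, hadd x w) = ⋃ w ∈ hadd x y, hadd w z
  mul_assoc : ∀ x y z : R, mul (mul x y) z = mul x (mul y z)
  left_distrib : ∀ x y z : R, (fun w => mul x w) '' hadd y z = hadd (mul x y) (mul x z)
  right_distrib : ∀ x y z : R, (fun w => mul w z) '' hadd x y = hadd (mul x z) (mul y z)
  zero_hadd : ∀ x : R, hadd zero x = {x}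
  hadd_zero : ∀ x : R, hadd x zero = {x}
  zero_mul : ∀ x : R, mul zero x = zero
  mul_zero : ∀ x : R, mul x zero = zero

namespace Semihyperring

variable {R : Type*} [Semihyperring R]

/-- The hyperoperation `⊕` extended to subsets: `A ⊕ B = ⋃ {a ⊕ b : a ∈ A, b ∈ B}`. -/
def haddSet (A B : Set R) : Set R := ⋃ a ∈ A, ⋃ b ∈ B, hadd a b

/-- The hypersum `x₁ ⊕ x₂ ⊕ ⋯ ⊕ xₚ` of a list of elements (the empty hypersum is `{0}`,
which is neutral since `0 ⊕ x = {x}`). -/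
def hsumList : List R → Set R
  | [] => {zero}
  | x :: xs => haddSet {x} (hsumList xs)

/-- A (two-sided) hyperideal: a nonempty subset closed under `⊕` and under
multiplication by arbitrary elements of `R` on both sides. -/
def IsHyperideal (I : Set R) : Prop :=
  I.Nonempty ∧ (∀ x ∈ I, ∀ y ∈ I, hadd x y ⊆ I) ∧
    (∀ r : R, ∀ x ∈ I, mul r x ∈ I ∧ mul x r ∈ I)

/-- A right hyperideal. -/
def IsRightHyperideal (I : Set R) : Prop :=
  I.Nonempty ∧ (∀ x ∈ I, ∀ y ∈ I, hadd x y ⊆ I) ∧ (∀ x ∈ I, ∀ r : R, mul x r ∈ I)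

/-- A left hyperideal. -/
def IsLeftHyperideal (I : Set R) : Prop :=
  I.Nonempty ∧ (∀ x ∈ I, ∀ y ∈ I, hadd x y ⊆ I) ∧ (∀ x ∈ I, ∀ r : R, mul r x ∈ I)

/-- The product of two subsets:
`AB = {x : x ∈ a₁b₁ ⊕ ⋯ ⊕ aₚbₚ for some p ≥ 1, aᵢ ∈ A, bᵢ ∈ B}`. -/
def setProd (A B : Set R) : Set R :=
  {x | ∃ l : List (R × R), l ≠ [] ∧ (∀ p ∈ l, p.1 ∈ A ∧ p.2 ∈ B) ∧
    x ∈ hsumList (l.map fun p => mul p.1 p.2)}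

/-- `R` is fully idempotent if every hyperideal `I` satisfies `I² = I`. -/
def FullyIdempotent (R : Type*) [Semihyperring R] : Prop :=
  ∀ I : Set R, IsHyperideal I → setProd I I = I

/-- `R` is (von Neumann) regular if every `x` satisfies `x = x·a·x` for some `a`. -/
def Regular (R : Type*) [Semihyperring R] : Prop :=
  ∀ x : R, ∃ a : R, x = mul (mul x a) x

/-- A fuzzy hyperideal of `R`: a function `μ : R → [0,1]` with
`inf {μ z : z ∈ x ⊕ y} ≥ min (μ x) (μ y)` and `μ (x·y) ≥ max (μ x) (μ y)`. -/
def IsFuzzyHyperideal (μ : R → unitInterval) : Prop :=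
  (∀ x y : R, μ x ⊓ μ y ≤ ⨅ z ∈ hadd x y, μ z) ∧
  (∀ x y : R, μ x ⊔ μ y ≤ μ (mul x y))

/-- A fuzzy right hyperideal: `inf {λ z : z ∈ x ⊕ y} ≥ min (λ x) (λ y)` and `λ (x·y) ≥ λ x`. -/
def IsFuzzyRightHyperideal (μ : R → unitInterval) : Prop :=
  (∀ x y : R, μ x ⊓ μ y ≤ ⨅ z ∈ hadd x y, μ z) ∧
  (∀ x y : R, μ x ≤ μ (mul x y))

/-- A fuzzy left hyperideal: `inf {λ z : z ∈ x ⊕ y} ≥ min (λ x) (λ y)` and `λ (x·y) ≥ λ y`. -/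
def IsFuzzyLeftHyperideal (μ : R → unitInterval) : Prop :=
  (∀ x y : R, μ x ⊓ μ y ≤ ⨅ z ∈ hadd x y, μ z) ∧
  (∀ x y : R, μ y ≤ μ (mul x y))

/-- The product `λμ` of fuzzy subsets:
`(λμ)(x) = ⋁ { ⋀_{1≤i≤p} (λ yᵢ ⊓ μ zᵢ) : p ≥ 1, x ∈ y₁z₁ ⊕ ⋯ ⊕ yₚzₚ }`. -/
noncomputable def fprod (lam mu : R → unitInterval) (x : R) : unitInterval :=
  sSup {t | ∃ l : List (R × R), l ≠ [] ∧
    x ∈ hsumList (l.map fun p => mul p.1 p.2) ∧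
    t = ⨅ p ∈ l, lam p.1 ⊓ mu p.2}

/-- The sum `λ ⊕ μ` of fuzzy subsets:
`(λ ⊕ μ)(x) = ⋁ { λ y ⊓ μ z : x ∈ y ⊕ z }`. -/
noncomputable def fsum (lam mu : R → unitInterval) (x : R) : unitInterval :=
  sSup {t | ∃ y z : R, x ∈ hadd y z ∧ t = lam y ⊓ mu z}

/-- The composition `λ ∘ μ` of fuzzy subsets:
`(λ ∘ μ)(x) = ⋁ { λ y ⊓ μ z : x = y·z }` (with `⋁ ∅ = 0`). -/
noncomputable def fcomp (lam mu : R → unitInterval) (x : R) : unitInterval :=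
  sSup {t | ∃ y z : R, x = mul y z ∧ t = lam y ⊓ mu z}

/-- A fuzzy prime hyperideal: a fuzzy hyperideal `η` such that for all fuzzy hyperideals
`λ, μ`, `λμ ≤ η` implies `λ ≤ η` or `μ ≤ η`. -/
def IsFuzzyPrimeHyperideal (η : R → unitInterval) : Prop :=
  IsFuzzyHyperideal η ∧ ∀ lam mu : R → unitInterval, IsFuzzyHyperideal lam →
    IsFuzzyHyperideal mu → fprod lam mu ≤ η → lam ≤ η ∨ mu ≤ η

/-- A fuzzy irreducible hyperideal: a fuzzy hyperideal `η` such that for all fuzzy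
hyperideals `λ, μ`, `min (λ, μ) = η` (pointwise) implies `λ = η` or `μ = η`. -/
def IsFuzzyIrreducibleHyperideal (η : R → unitInterval) : Prop :=
  IsFuzzyHyperideal η ∧ ∀ lam mu : R → unitInterval, IsFuzzyHyperideal lam →
    IsFuzzyHyperideal mu → lam ⊓ mu = η → lam = η ∨ mu = η

/-- `FP R`: the set of proper fuzzy prime hyperideals of `R`
(`η` is proper if it is not the constant function `1`). -/
def FP (R : Type*) [Semihyperring R] : Set (R → unitInterval) :=
  {η | IsFuzzyPrimeHyperideal η ∧ η ≠ fun _ => 1}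

/-- `O λ = {μ ∈ FP R : λ ≰ μ}`. -/
def O (lam : R → unitInterval) : Set (R → unitInterval) :=
  {mu ∈ FP R | ¬ lam ≤ mu}

/-- The sum `Σᵢ ηᵢ` of an arbitrary family of fuzzy subsets:
`(Σᵢ ηᵢ)(x) = ⋁ { ⋀_{1≤k≤p} η_{i_k} (x_k) : p ≥ 1, x ∈ x₁ ⊕ ⋯ ⊕ xₚ }`. -/
noncomputable def famSum {ι : Type*} (η : ι → R → unitInterval) (x : R) : unitInterval :=
  sSup {t | ∃ l : List (ι × R), l ≠ [] ∧ x ∈ hsumList (l.map Prod.snd) ∧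
    t = ⨅ p ∈ l, η p.1 p.2}

lemma mem_haddSet {A B : Set R} {x : R} :
    x ∈ haddSet A B ↔ ∃ a ∈ A, ∃ b ∈ B, x ∈ hadd a b := by
  simp [haddSet]

lemma mem_hsumList_cons {a x : R} {l : List R} :
    x ∈ hsumList (a :: l) ↔ ∃ w ∈ hsumList l, x ∈ hadd a w := by
  simp [hsumList, mem_haddSet]

section FuzzyHyperideal

variable {μ : R → unitInterval}

lemma IsFuzzyHyperideal.isFuzzyRightHyperideal (hμ : IsFuzzyHyperideal μ) :
    IsFuzzyRightHyperideal μ :=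
  ⟨hμ.1, fun x y => le_sup_left.trans (hμ.2 x y)⟩

lemma iInf_le_of_mem_hsumList (hμ : ∀ x y : R, μ x ⊓ μ y ≤ ⨅ z ∈ hadd x y, μ z)
    {l : List R} (hl : l ≠ []) {x : R} (hx : x ∈ hsumList l) : (⨅ a ∈ l, μ a) ≤ μ x := by
  induction l generalizing x with
  | nil => exact absurd rfl hl
  | cons a l ih =>
    obtain ⟨w, hw, hxw⟩ := mem_hsumList_cons.mp hx
    rcases eq_or_ne l [] with rfl | hne
    · rw [hsumList, Set.mem_singleton_iff] at hw
      rw [hw, hadd_zero, Set.mem_singleton_iff] at hxw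
      rw [hxw]
      exact iInf₂_le a List.mem_cons_self
    · have hw : (⨅ b ∈ a :: l, μ b) ≤ μ w :=
        (le_iInf₂ fun b hb => iInf₂_le b (List.mem_cons_of_mem a hb)).trans (ih hne hw)
      calc (⨅ b ∈ a :: l, μ b) ≤ μ a ⊓ μ w := le_inf (iInf₂_le a List.mem_cons_self) hw
        _ ≤ μ x := (hμ a w).trans (iInf₂_le x hxw)

lemma fprod_le_left (hμ : IsFuzzyRightHyperideal μ) (ν : R → unitInterval) :
    fprod μ ν ≤ μ := by
  intro x
  refine sSup_le ?_
  rintro t ⟨l, hl, hx, rfl⟩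
  refine le_trans ?_ (iInf_le_of_mem_hsumList hμ.1 (by simpa using hl) hx)
  refine le_iInf₂ fun a ha => ?_
  obtain ⟨p, hp, rfl⟩ := List.mem_map.mp ha
  exact (iInf₂_le p hp).trans (inf_le_left.trans (hμ.2 p.1 p.2))

end FuzzyHyperideal

lemma le_fprod_of_mem_setProd {A B : Set R} {x : R} (hx : x ∈ setProd A B)
    {μ ν : R → unitInterval} {t : unitInterval}
    (hμ : ∀ a ∈ A, t ≤ μ a) (hν : ∀ b ∈ B, t ≤ ν b) : t ≤ fprod μ ν x := by
  obtain ⟨l, hl, hAB, hxl⟩ := hx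
  refine le_sSup_of_le ⟨l, hl, hxl, rfl⟩ (le_iInf₂ fun p hp => ?_)
  exact le_inf (hμ _ (hAB p hp).1) (hν _ (hAB p hp).2)

lemma IsFuzzyHyperideal.isHyperideal_setOf_le {μ : R → unitInterval}
    (hμ : IsFuzzyHyperideal μ) (x : R) : IsHyperideal {y | μ x ≤ μ y} := by
  refine ⟨⟨x, le_refl (μ x)⟩, fun a ha b hb z hz => ?_, fun r a ha => ⟨?_, ?_⟩⟩
  · exact (le_inf ha hb).trans ((hμ.1 a b).trans (iInf₂_le z hz))
  · exact ha.trans (le_sup_right.trans (hμ.2 r a))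
  · exact ha.trans (le_sup_left.trans (hμ.2 a r))

lemma le_fprod_self (hR : FullyIdempotent R) {μ : R → unitInterval}
    (hμ : IsFuzzyHyperideal μ) : μ ≤ fprod μ μ := by
  intro x
  have hx : x ∈ setProd {y | μ x ≤ μ y} {y | μ x ≤ μ y} := by
    rw [hR _ (hμ.isHyperideal_setOf_le x)]
    exact le_refl (μ x)
  exact le_fprod_of_mem_setProd hx (fun _ h => h) (fun _ h => h)

lemma isFuzzyHyperideal_indicator {I : Set R} (hI : IsHyperideal I) :
    IsFuzzyHyperideal (I.indicator 1) := by
  classical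
  obtain ⟨-, hadd_mem, hmul_mem⟩ := hI
  refine ⟨fun a b => ?_, fun a b => sup_le ?_ ?_⟩
  · by_cases hab : a ∈ I ∧ b ∈ I
    · refine le_iInf₂ fun z hz => ?_
      rw [Set.indicator_of_mem (hadd_mem a hab.1 b hab.2 hz)]
      exact unitInterval.le_one'
    · rcases not_and_or.mp hab with ha | hb
      · simp [Set.indicator_of_notMem ha]
      · simp [Set.indicator_of_notMem hb]
  · by_cases ha : a ∈ I
    · simp [Set.indicator_of_mem ha, Set.indicator_of_mem (hmul_mem b a ha).2]
    · simp [Set.indicator_of_notMem ha]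
  · by_cases hb : b ∈ I
    · simp [Set.indicator_of_mem hb, Set.indicator_of_mem (hmul_mem a b hb).1]
    · simp [Set.indicator_of_notMem hb]

lemma fprod_indicator (A B : Set R) :
    fprod (A.indicator 1) (B.indicator 1) = (setProd A B).indicator 1 := by
  classical
  funext x
  by_cases hx : x ∈ setProd A B
  · rw [Set.indicator_of_mem hx]
    refine le_antisymm unitInterval.le_one' (le_fprod_of_mem_setProd hx ?_ ?_) <;>
      simp +contextual [Set.indicator_of_mem]
  · rw [Set.indicator_of_notMem hx]
    refine le_antisymm (sSup_le ?_) unitInterval.nonneg'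
    rintro t ⟨l, hl, hxl, rfl⟩
    obtain ⟨p, hp, hpAB⟩ : ∃ p ∈ l, ¬(p.1 ∈ A ∧ p.2 ∈ B) := by
      by_contra! h
      exact hx ⟨l, hl, h, hxl⟩
    refine (iInf₂_le p hp).trans ?_
    rcases not_and_or.mp hpAB with h | h
    · simp [Set.indicator_of_notMem h]
    · simp [Set.indicator_of_notMem h]

end Semihyperring

open Semihyperring in
/-- `R` is fully idempotent iff every fuzzy hyperideal `δ` of `R` is idempotent,
i.e. `δδ = δ`. -/
theorem fullyIdempotent_iff_fuzzy_idempotent (R : Type*) [Semihyperring R] :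
    FullyIdempotent R ↔
      ∀ δ : R → unitInterval, IsFuzzyHyperideal δ → fprod δ δ = δ := by
  refine ⟨fun hR δ hδ => ?_, fun h I hI => ?_⟩
  · exact le_antisymm (fprod_le_left hδ.isFuzzyRightHyperideal δ) (le_fprod_self hR hδ)
  · apply Set.indicator_one_inj (M₀ := unitInterval)
    rw [← fprod_indicator, h _ (isFuzzyHyperideal_indicator hI)]
end

section
/- Let (R, ⊕, ·) be a fully idempotent semihyperring and η a fuzzy hyperideal of R. If η is a fuzzy irreducible hyperideal, then η is a fuzzy prime hyperideal. -/
/-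
Full idempotency gives `λ ⊓ μ ≤ λμ`: each `x` lies in the square of the hyperideal
`{z | ν x ≤ ν z for every fuzzy hyperideal ν}`, i.e. in a hypersum of products `aᵢbᵢ` with
`λ aᵢ ≥ λ x` and `μ bᵢ ≥ μ x`. So `λμ ≤ η` gives `λ ⊓ μ ≤ η`. The joins `λ + η` and `μ + η`
(`famSum`) are fuzzy hyperideals, and by distributivity a product of their hypersums is a hypersum
of products `ab` each bounded by `η`, either through `λ ⊓ μ ≤ η` or because a factor is bounded by
`η`. Hence `(λ + η) ⊓ (μ + η) ≤ (λ + η)(μ + η) ≤ η`, so `(λ + η) ⊓ (μ + η) = η`, and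
irreducibility yields `λ ≤ λ + η = η` or `μ ≤ μ + η = η`.
-/

namespace Semihyperring

variable {R : Type*} [Semihyperring R]

lemma exists_mem_hadd_of_mem_hadd_of_mem_hadd {x y z w t : R} (hw : w ∈ hadd x y)
    (ht : t ∈ hadd w z) : ∃ v ∈ hadd y z, t ∈ hadd x v := by
  have ht' : t ∈ ⋃ w ∈ hadd x y, hadd w z := Set.mem_biUnion hw ht
  rw [← hadd_assoc] at ht'
  simpa using ht'

@[simp]
lemma hsumList_nil : hsumList ([] : List R) = {zero} := rfl

@[simp]
lemma hsumList_singleton (a : R) : hsumList [a] = {a} := by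
  ext x
  simp [mem_hsumList_cons, hadd_zero]

lemma mem_hsumList_append {l₁ l₂ : List R} {x y z : R} (hx : x ∈ hsumList l₁)
    (hy : y ∈ hsumList l₂) (hz : z ∈ hadd x y) : z ∈ hsumList (l₁ ++ l₂) := by
  induction l₁ generalizing x z with
  | nil =>
    rw [hsumList_nil, Set.mem_singleton_iff] at hx
    rw [hx, zero_hadd, Set.mem_singleton_iff] at hz
    rwa [List.nil_append, hz]
  | cons a l ih =>
    obtain ⟨w, hw, hxw⟩ := mem_hsumList_cons.1 hx
    obtain ⟨v, hv, hzv⟩ := exists_mem_hadd_of_mem_hadd_of_mem_hadd hxw hz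
    exact mem_hsumList_cons.2 ⟨v, ih hw hv, hzv⟩

def IsHaddHom (g : R → R) : Prop :=
  g zero = zero ∧ ∀ a b x, x ∈ hadd a b → g x ∈ hadd (g a) (g b)

lemma isHaddHom_mul_left (r : R) : IsHaddHom (mul r) :=
  ⟨Semihyperring.mul_zero r, fun a b x hx => by rw [← left_distrib]; exact ⟨x, hx, rfl⟩⟩

lemma isHaddHom_mul_right (r : R) : IsHaddHom (fun x => mul x r) :=
  ⟨Semihyperring.zero_mul r, fun a b x hx => by rw [← right_distrib]; exact ⟨x, hx, rfl⟩⟩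

lemma IsHaddHom.map_mem_hsumList {g : R → R} (hg : IsHaddHom g) {l : List R} {x : R}
    (hx : x ∈ hsumList l) : g x ∈ hsumList (l.map g) := by
  induction l generalizing x with
  | nil =>
    rw [hsumList_nil, Set.mem_singleton_iff] at hx
    rw [hx, hg.1]
    rfl
  | cons a l ih =>
    obtain ⟨w, hw, hxw⟩ := mem_hsumList_cons.1 hx
    exact mem_hsumList_cons.2 ⟨g w, ih hw, hg.2 a w x hxw⟩

namespace IsFuzzyHyperideal

variable {ν : R → unitInterval}

lemma inf_le_of_mem_hadd (hν : IsFuzzyHyperideal ν) {x y z : R} (hz : z ∈ hadd x y) :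
    ν x ⊓ ν y ≤ ν z :=
  (hν.1 x y).trans (iInf₂_le z hz)

lemma le_mul_right (hν : IsFuzzyHyperideal ν) (x y : R) : ν x ≤ ν (mul x y) :=
  le_sup_left.trans (hν.2 x y)

lemma le_mul_left (hν : IsFuzzyHyperideal ν) (x y : R) : ν y ≤ ν (mul x y) :=
  le_sup_right.trans (hν.2 x y)

lemma le_zero (hν : IsFuzzyHyperideal ν) (x : R) : ν x ≤ ν zero := by
  simpa only [Semihyperring.zero_mul] using hν.le_mul_left zero x

lemma le_of_mem_hsumList (hν : IsFuzzyHyperideal ν) {t : unitInterval} (h0 : t ≤ ν zero)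
    {l : List R} (hl : ∀ a ∈ l, t ≤ ν a) {x : R} (hx : x ∈ hsumList l) : t ≤ ν x := by
  induction l generalizing x with
  | nil =>
    rw [hsumList_nil, Set.mem_singleton_iff] at hx
    rwa [hx]
  | cons a l ih =>
    obtain ⟨w, hw, hxw⟩ := mem_hsumList_cons.1 hx
    have hwt : t ≤ ν w := ih (fun b hb => hl b (List.mem_cons_of_mem a hb)) hw
    exact (le_inf (hl a List.mem_cons_self) hwt).trans (hν.inf_le_of_mem_hadd hxw)

lemma le_mul_of_mem_hsumList (hν : IsFuzzyHyperideal ν) {t : unitInterval} (h0 : t ≤ ν zero)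
    {l₁ l₂ : List R} (h : ∀ a ∈ l₁, ∀ b ∈ l₂, t ≤ ν (mul a b)) {y z : R}
    (hy : y ∈ hsumList l₁) (hz : z ∈ hsumList l₂) : t ≤ ν (mul y z) := by
  refine hν.le_of_mem_hsumList h0 ?_ ((isHaddHom_mul_right z).map_mem_hsumList hy)
  simp only [List.mem_map]
  rintro _ ⟨a, ha, rfl⟩
  refine hν.le_of_mem_hsumList h0 ?_ ((isHaddHom_mul_left a).map_mem_hsumList hz)
  simp only [List.mem_map]
  rintro _ ⟨b, hb, rfl⟩
  exact h a ha b hb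

end IsFuzzyHyperideal

lemma fprod_le_of_inf_le {lam mu eta : R → unitInterval} (heta : IsFuzzyHyperideal eta)
    (h : ∀ y z, lam y ⊓ mu z ≤ eta (mul y z)) : fprod lam mu ≤ eta := by
  intro x
  refine sSup_le ?_
  rintro _ ⟨l, hl, hx, rfl⟩
  have hbound : ∀ p ∈ l, (⨅ q ∈ l, lam q.1 ⊓ mu q.2) ≤ eta (mul p.1 p.2) :=
    fun p hp => (iInf₂_le p hp).trans (h _ _)
  obtain ⟨p, hp⟩ := List.exists_mem_of_ne_nil l hl
  refine heta.le_of_mem_hsumList ((hbound p hp).trans (heta.le_zero _)) ?_ hx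
  simp only [List.mem_map]
  rintro _ ⟨p, hp, rfl⟩
  exact hbound p hp

lemma FullyIdempotent.inf_le_fprod (h : FullyIdempotent R) {lam mu : R → unitInterval}
    (hlam : IsFuzzyHyperideal lam) (hmu : IsFuzzyHyperideal mu) : lam ⊓ mu ≤ fprod lam mu := by
  intro x
  set I : Set R := {z | ∀ ν : R → unitInterval, IsFuzzyHyperideal ν → ν x ≤ ν z}
  have hxI : x ∈ I := fun ν _ => le_rfl
  have hI : IsHyperideal I := by
    refine ⟨⟨x, hxI⟩, fun a ha b hb z hz ν hν => ?_, fun r a ha => ⟨?_, ?_⟩⟩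
    · exact (le_inf (ha ν hν) (hb ν hν)).trans (hν.inf_le_of_mem_hadd hz)
    · exact fun ν hν => (ha ν hν).trans (hν.le_mul_left r a)
    · exact fun ν hν => (ha ν hν).trans (hν.le_mul_right a r)
  obtain ⟨l, hl, hlI, hx⟩ : x ∈ setProd I I := by rw [h I hI]; exact hxI
  refine le_sSup_of_le ⟨l, hl, hx, rfl⟩ (le_iInf₂ fun p hp => ?_)
  exact inf_le_inf ((hlI p hp).1 lam hlam) ((hlI p hp).2 mu hmu)

section famSum

variable {ι : Type*} {F : ι → R → unitInterval}

lemma le_famSum (F : ι → R → unitInterval) (i : ι) : F i ≤ famSum F := fun x =>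
  le_sSup ⟨[(i, x)], List.cons_ne_nil _ _, by simp, by simp⟩

lemma famSum_inf_le_of_mem_hadd {x y z : R} (hz : z ∈ hadd x y) :
    famSum F x ⊓ famSum F y ≤ famSum F z := by
  rw [famSum, famSum, sSup_inf_sSup]
  refine iSup₂_le ?_
  rintro ⟨_, _⟩ ⟨⟨l₁, hl₁, hx, rfl⟩, ⟨l₂, -, hy, rfl⟩⟩
  have hz' : z ∈ hsumList ((l₁ ++ l₂).map Prod.snd) := by
    rw [List.map_append]
    exact mem_hsumList_append hx hy hz
  refine le_sSup_of_le ⟨l₁ ++ l₂, by simp [hl₁], hz', rfl⟩ (le_iInf₂ fun p hp => ?_)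
  rcases List.mem_append.1 hp with hp | hp
  · exact inf_le_left.trans (iInf₂_le p hp)
  · exact inf_le_right.trans (iInf₂_le p hp)

lemma famSum_le_famSum_apply {g : R → R} (hg : IsHaddHom g) (hF : ∀ i a, F i a ≤ F i (g a))
    (x : R) : famSum F x ≤ famSum F (g x) := by
  refine sSup_le ?_
  rintro _ ⟨l, hl, hx, rfl⟩
  have hgx : g x ∈ hsumList ((l.map (Prod.map id g)).map Prod.snd) := by
    have hgx' := hg.map_mem_hsumList hx
    rwa [List.map_map] at hgx' ⊢
  refine le_sSup_of_le ⟨_, by simpa using hl, hgx, rfl⟩ (le_iInf₂ fun p hp => ?_)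
  obtain ⟨q, hq, rfl⟩ := List.mem_map.1 hp
  exact (iInf₂_le q hq).trans (hF _ _)

lemma isFuzzyHyperideal_famSum (hF : ∀ i, IsFuzzyHyperideal (F i)) :
    IsFuzzyHyperideal (famSum F) := by
  refine ⟨fun x y => le_iInf₂ fun z hz => famSum_inf_le_of_mem_hadd hz, fun x y => sup_le ?_ ?_⟩
  · exact famSum_le_famSum_apply (isHaddHom_mul_right y) (fun i a => (hF i).le_mul_right a y) x
  · exact famSum_le_famSum_apply (isHaddHom_mul_left x) (fun i a => (hF i).le_mul_left x a) y

lemma famSum_inf_famSum_le {κ : Type*} {G : κ → R → unitInterval} {eta : R → unitInterval}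
    (heta : IsFuzzyHyperideal eta) (hFG : ∀ i j a b, F i a ⊓ G j b ≤ eta (mul a b)) (y z : R) :
    famSum F y ⊓ famSum G z ≤ eta (mul y z) := by
  rw [famSum, famSum, sSup_inf_sSup]
  refine iSup₂_le ?_
  rintro ⟨_, _⟩ ⟨⟨l₁, hl₁, hy, rfl⟩, ⟨l₂, hl₂, hz, rfl⟩⟩
  have hbound : ∀ p ∈ l₁, ∀ q ∈ l₂,
      (⨅ p ∈ l₁, F p.1 p.2) ⊓ (⨅ q ∈ l₂, G q.1 q.2) ≤ eta (mul p.2 q.2) :=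
    fun p hp q hq => (inf_le_inf (iInf₂_le p hp) (iInf₂_le q hq)).trans (hFG _ _ _ _)
  obtain ⟨p, hp⟩ := List.exists_mem_of_ne_nil l₁ hl₁
  obtain ⟨q, hq⟩ := List.exists_mem_of_ne_nil l₂ hl₂
  refine heta.le_mul_of_mem_hsumList ((hbound p hp q hq).trans (heta.le_zero _)) ?_ hy hz
  simp only [List.mem_map]
  rintro _ ⟨p, hp, rfl⟩ _ ⟨q, hq, rfl⟩
  exact hbound p hp q hq

end famSum

lemma fprod_famSum_pair_le {lam mu eta : R → unitInterval} (hlam : IsFuzzyHyperideal lam)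
    (hmu : IsFuzzyHyperideal mu) (heta : IsFuzzyHyperideal eta) (hle : lam ⊓ mu ≤ eta) :
    fprod (famSum ![lam, eta]) (famSum ![mu, eta]) ≤ eta := by
  refine fprod_le_of_inf_le heta (famSum_inf_famSum_le heta fun i j a b => ?_)
  fin_cases i <;> fin_cases j
  · exact (inf_le_inf (hlam.le_mul_right a b) (hmu.le_mul_left a b)).trans (hle _)
  · exact inf_le_right.trans (heta.le_mul_left a b)
  all_goals exact inf_le_left.trans (heta.le_mul_right a b)

end Semihyperring

open Semihyperring in
theorem fuzzyIrreducible_is_fuzzyPrime_general {R : Type*} [Semihyperring R]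
    (h : FullyIdempotent R) (eta : R → unitInterval)
    (hi : IsFuzzyIrreducibleHyperideal eta) :
    IsFuzzyPrimeHyperideal eta := by
  obtain ⟨heta, hirr⟩ := hi
  refine ⟨heta, fun lam mu hlam hmu hprod => ?_⟩
  have hjoin : ∀ {ν}, IsFuzzyHyperideal ν → IsFuzzyHyperideal (famSum ![ν, eta]) :=
    fun hν => isFuzzyHyperideal_famSum (Fin.forall_fin_two.2 ⟨hν, heta⟩)
  have hmeet : famSum ![lam, eta] ⊓ famSum ![mu, eta] = eta := by
    refine le_antisymm ?_ (le_inf (le_famSum ![lam, eta] 1) (le_famSum ![mu, eta] 1))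
    have hle : lam ⊓ mu ≤ eta := (h.inf_le_fprod hlam hmu).trans hprod
    exact (h.inf_le_fprod (hjoin hlam) (hjoin hmu)).trans
      (fprod_famSum_pair_le hlam hmu heta hle)
  rcases hirr _ _ (hjoin hlam) (hjoin hmu) hmeet with hl | hm
  · exact Or.inl (hl ▸ le_famSum ![lam, eta] 0)
  · exact Or.inr (hm ▸ le_famSum ![mu, eta] 0)

open Semihyperring in
/-- in a fully idempotent semihyperring, every fuzzy irreducible hyperideal is
a fuzzy prime hyperideal. -/
theorem fuzzyIrreducible_is_fuzzyPrime {R : Type*} [Semihyperring R]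
    (h : FullyIdempotent R) (eta : R → unitInterval) (heta : IsFuzzyHyperideal eta)
    (hi : IsFuzzyIrreducibleHyperideal eta) :
    IsFuzzyPrimeHyperideal eta :=
  fuzzyIrreducible_is_fuzzyPrime_general h eta hi
end
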